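/- arXiv:2106.06812 — 3 statements merged into one kernel-verified Lean document; each statement's English description precedes it below -/
import Mathlib

section
/- Let q ≥ 1 be a natural number and t* = (π/4)^(1/q). Then for all real x ∈ (0, t*) and all t ∈ (0, t*], we have t·tan(x^q) < x. -/
open Real

lemma strictConvexOn_tan_aux : StrictConvexOn ℝ (Set.Icc 0 (π / 4)) Real.tan := by
  have hsub : Set.Icc (0:ℝ) (π / 4) ⊆ {x : ℝ | Real.cos x ≠ 0} := by
    intro z hz
    have hπ := Real.pi_pos
    exact ne_of_gt (Real.cos_pos_of_mem_Ioo ⟨by linarith [hz.1], by linarith [hz.2]⟩)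
  refine StrictMonoOn.strictConvexOn_of_deriv (convex_Icc _ _)
    (Real.continuousOn_tan.mono hsub) ?_
  rw [interior_Icc]
  intro a ha b hb hab
  rw [Real.deriv_tan, Real.deriv_tan]
  have hπ := Real.pi_pos
  have hca : 0 < Real.cos a := Real.cos_pos_of_mem_Ioo ⟨by linarith [ha.1], by linarith [ha.2]⟩
  have hcb : 0 < Real.cos b := Real.cos_pos_of_mem_Ioo ⟨by linarith [hb.1], by linarith [hb.2]⟩
  have hlt : Real.cos b < Real.cos a := by
    apply Real.cos_lt_cos_of_nonneg_of_le_pi (le_of_lt ha.1) (by linarith [hb.2]) hab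
  have h2 : Real.cos b ^ 2 < Real.cos a ^ 2 := by
    apply pow_lt_pow_left₀ hlt hcb.le (by norm_num)
  rw [div_lt_div_iff₀ (by positivity) (by positivity)]
  nlinarith

lemma tan_lt_linear {y : ℝ} (h0 : 0 < y) (h1 : y < π / 4) :
    Real.tan y < 4 / π * y := by
  have hπ := Real.pi_pos
  have hane : (0:ℝ) ≠ π / 4 := by positivity
  have ha' : (0:ℝ) < 1 - 4 / π * y := by
    rw [sub_pos, div_mul_eq_mul_div, div_lt_one hπ]; linarith
  have hb' : (0:ℝ) < 4 / π * y := by positivity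
  have hsum : (1 - 4 / π * y) + 4 / π * y = 1 := by ring
  have key := strictConvexOn_tan_aux.2
    (Set.mem_Icc.mpr ⟨le_refl 0, by linarith⟩)
    (Set.mem_Icc.mpr ⟨by linarith, le_refl _⟩)
    hane ha' hb' hsum
  have hy : (1 - 4 / π * y) • (0:ℝ) + (4 / π * y) • (π / 4) = y := by
    simp only [smul_eq_mul]; field_simp; ring
  rw [hy, Real.tan_zero, Real.tan_pi_div_four] at key
  simpa using key

theorem t_tan_lt_x (q : ℕ) (hq : 1 ≤ q) (t x : ℝ)
    (hx0 : 0 < x) (hx1 : x < (π / 4) ^ ((1 : ℝ) / q))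
    (ht0 : 0 < t) (ht1 : t ≤ (π / 4) ^ ((1 : ℝ) / q)) :
    t * Real.tan (x ^ q) < x := by
  have hπ := Real.pi_pos
  set T : ℝ := (π / 4) ^ ((1 : ℝ) / q) with hT
  have hq0 : (q : ℝ) ≠ 0 := by positivity
  have hT0 : 0 < T := Real.rpow_pos_of_pos (by positivity) _
  have hTq : T ^ q = π / 4 := by
    rw [hT, ← Real.rpow_natCast ((π / 4) ^ ((1:ℝ)/q)) q, ← Real.rpow_mul (by positivity)]
    rw [one_div, inv_mul_cancel₀ hq0, Real.rpow_one]
  have hxq : x ^ q < π / 4 := by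
    rw [← hTq]
    exact pow_lt_pow_left₀ hx1 hx0.le (by omega)
  have hxq0 : 0 < x ^ q := pow_pos hx0 q
  -- key linear bound
  have h1 : Real.tan (x ^ q) < 4 / π * x ^ q := tan_lt_linear hxq0 hxq
  -- T * (4/π) * x^(q-1) ≤ 1
  have hxpow : x ^ (q - 1) ≤ T ^ (q - 1) :=
    pow_le_pow_left₀ hx0.le hx1.le _
  have hTpow : T * T ^ (q - 1) = π / 4 := by
    rw [← pow_succ', ← hTq]
    congr 1
    omega
  have h2 : T * (4 / π * x ^ (q - 1)) ≤ 1 := by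
    have : T * (4 / π * x ^ (q - 1)) ≤ T * (4 / π * T ^ (q - 1)) := by
      apply mul_le_mul_of_nonneg_left _ hT0.le
      apply mul_le_mul_of_nonneg_left hxpow (by positivity)
      
    calc T * (4 / π * x ^ (q - 1)) ≤ T * (4 / π * T ^ (q - 1)) := this
      _ = 4 / π * (T * T ^ (q - 1)) := by ring
      _ = 1 := by rw [hTpow]; field_simp
  have hxsplit : x ^ q = x ^ (q - 1) * x := by
    rw [← pow_succ]
    congr 1
    omega
  calc t * Real.tan (x ^ q) < t * (4 / π * x ^ q) := by
        exact mul_lt_mul_of_pos_left h1 ht0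
    _ ≤ T * (4 / π * x ^ q) := by
        apply mul_le_mul_of_nonneg_right ht1 (by positivity)
    _ = T * (4 / π * x ^ (q - 1)) * x := by rw [hxsplit]; ring
    _ ≤ 1 * x := mul_le_mul_of_nonneg_right h2 hx0.le
    _ = x := one_mul x
end

section
/- Let p, q ≥ 1 be natural numbers with pq > 1, and t* = (π/4)^(1/q). For all complex λ and z with |λ| < t* and |z| < t*, we have |λ·(tan(z^q))^p| < |z| when z ≠ 0. -/
/-! Since `|cos w|² - |sin w|² = cos (2 Re w)`, `tan` maps the disc `|w| < π/4` into the unit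
disc, so the Schwarz lemma gives `|tan w| ≤ (4/π) |w|` there. With `T = (π/4)^(1/q)` and
`r = |z| < T` this yields `|λ tan^p (z^q)| < T (r/T)^(pq) ≤ r`. -/

open Real

namespace Complex

open ComplexConjugate

theorem normSq_cos_sub_normSq_sin (w : ℂ) :
    normSq (cos w) - normSq (sin w) = Real.cos (2 * w.re) := by
  have h : cos (w + conj w) = ((normSq (cos w) - normSq (sin w) : ℝ) : ℂ) := by
    rw [cos_add, cos_conj, sin_conj, mul_conj, mul_conj]
    push_cast
    ring
  rw [add_conj, ← ofReal_cos] at h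
  exact_mod_cast h.symm

theorem normSq_sin_lt_normSq_cos {w : ℂ} (hw : |w.re| < π / 4) :
    normSq (sin w) < normSq (cos w) := by
  obtain ⟨hlo, hhi⟩ := abs_lt.1 hw
  have : 0 < Real.cos (2 * w.re) := Real.cos_pos_of_mem_Ioo ⟨by linarith, by linarith⟩
  linarith [normSq_cos_sub_normSq_sin w]

theorem norm_tan_lt_one_of_abs_re_lt {w : ℂ} (hw : |w.re| < π / 4) : ‖tan w‖ < 1 := by
  have h := normSq_sin_lt_normSq_cos hw
  rw [normSq_eq_norm_sq, normSq_eq_norm_sq] at h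
  have hcos : 0 < ‖cos w‖ := by nlinarith [norm_nonneg (sin w), norm_nonneg (cos w)]
  rw [tan_eq_sin_div_cos, norm_div, div_lt_one hcos]
  exact lt_of_pow_lt_pow_left₀ 2 hcos.le h

theorem norm_tan_le_of_norm_lt_pi_div_four {w : ℂ} (hw : ‖w‖ < π / 4) :
    ‖tan w‖ ≤ ‖w‖ / (π / 4) := by
  have hre {v : ℂ} (hv : v ∈ Metric.ball 0 (π / 4)) : |v.re| < π / 4 :=
    (abs_re_le_norm v).trans_lt (mem_ball_zero_iff.1 hv)
  have hd : DifferentiableOn ℂ tan (Metric.ball 0 (π / 4)) := fun v hv =>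
    (differentiableAt_tan.2 fun h0 => (normSq_nonneg _).not_gt <| by
      simpa [h0] using normSq_sin_lt_normSq_cos (hre hv)).differentiableWithinAt
  have hmaps : Set.MapsTo tan (Metric.ball 0 (π / 4)) (Metric.closedBall (tan 0) 1) :=
    fun v hv => by
      simpa using (norm_tan_lt_one_of_abs_re_lt (hre hv)).le
  simpa [div_eq_inv_mul] using
    dist_le_div_mul_dist_of_mapsTo_ball hd hmaps (mem_ball_zero_iff.2 hw)

end Complex

theorem abs_f_lt_abs_general (p q : ℕ) (hp : 1 ≤ p) (hq : 1 ≤ q)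
    (lam z : ℂ)
    (hlam : ‖lam‖ < (π / 4) ^ ((1 : ℝ) / q))
    (hz : ‖z‖ < (π / 4) ^ ((1 : ℝ) / q))
    (hz0 : z ≠ 0) :
    ‖lam * (Complex.tan (z ^ q)) ^ p‖ < ‖z‖ := by
  set T : ℝ := (π / 4) ^ ((1 : ℝ) / q)
  have hTq : T ^ q = π / 4 := by
    rw [show T = (π / 4) ^ ((q : ℝ)⁻¹) by simp [T]]
    exact Real.rpow_inv_natCast_pow (by positivity) (by omega)
  have hT : 0 < T := by positivity
  have hr : 0 < ‖z‖ := norm_pos_iff.2 hz0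
  have hzq : ‖z ^ q‖ < π / 4 := by
    rw [norm_pow, ← hTq]; exact pow_lt_pow_left₀ hz hr.le (by omega)
  have htan : ‖Complex.tan (z ^ q)‖ ≤ (‖z‖ / T) ^ q := by
    simpa only [div_pow, hTq, norm_pow] using Complex.norm_tan_le_of_norm_lt_pi_div_four hzq
  calc ‖lam * Complex.tan (z ^ q) ^ p‖ = ‖lam‖ * ‖Complex.tan (z ^ q)‖ ^ p := by
        rw [norm_mul, norm_pow]
    _ ≤ ‖lam‖ * (‖z‖ / T) ^ (q * p) := by rw [pow_mul]; gcongr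
    _ < T * (‖z‖ / T) ^ (q * p) := by gcongr
    _ ≤ T * (‖z‖ / T) := by
        gcongr
        exact pow_le_of_le_one (by positivity) ((div_le_one hT).2 hz.le) (by positivity)
    _ = ‖z‖ := by field_simp

theorem abs_f_lt_abs (p q : ℕ) (hp : 1 ≤ p) (hq : 1 ≤ q) (hpq : 1 < p * q)
    (lam z : ℂ)
    (hlam : ‖lam‖ < (π / 4) ^ ((1 : ℝ) / q))
    (hz : ‖z‖ < (π / 4) ^ ((1 : ℝ) / q))
    (hz0 : z ≠ 0) :
    ‖lam * (Complex.tan (z ^ q)) ^ p‖ < ‖z‖ :=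
  abs_f_lt_abs_general p q hp hq lam z hlam hz hz0
end

section
/- Let p, q ≥ 1 and g_t(x) = t·(tanh(x^q))^p for t, x > 0. Then there exists t₀ ≥ 1 such that for all t ∈ (0, t₀) and all x > 0, g_t^n(x) → 0 as n → ∞; in particular t₀ > (π/4)^(1/q). -/
open Real Filter

lemma tanh_pos' {y : ℝ} (hy : 0 < y) : 0 < Real.tanh y := by
  rw [Real.tanh_eq_sinh_div_cosh]
  exact div_pos (by rwa [Real.sinh_pos_iff]) (Real.cosh_pos y)

lemma tanh_lt_one' (y : ℝ) : Real.tanh y < 1 := by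
  rw [Real.tanh_eq_sinh_div_cosh, div_lt_one (Real.cosh_pos y)]
  exact Real.sinh_lt_cosh y

lemma tanh_le_self {y : ℝ} (hy : 0 ≤ y) : Real.tanh y ≤ y := by
  have key : ∀ z : ℝ, 0 ≤ z → Real.sinh z ≤ z * Real.cosh z := by
    intro z hz
    have hmono : MonotoneOn (fun w : ℝ => w * Real.cosh w - Real.sinh w) (Set.Ici 0) := by
      have hd : ∀ w : ℝ, HasDerivAt (fun w : ℝ => w * Real.cosh w - Real.sinh w)
          (1 * Real.cosh w + w * Real.sinh w - Real.cosh w) w := fun w =>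
        ((hasDerivAt_id w).mul (Real.hasDerivAt_cosh w)).sub (Real.hasDerivAt_sinh w)
      apply monotoneOn_of_deriv_nonneg (convex_Ici 0)
      · exact ((continuous_id.mul Real.continuous_cosh).sub Real.continuous_sinh).continuousOn
      · intro w _
        exact (hd w).differentiableAt.differentiableWithinAt
      · intro w hw
        rw [(hd w).deriv]
        have hw0 : 0 < w := by simpa using hw
        have : 0 ≤ w * Real.sinh w :=
          mul_nonneg hw0.le (by simpa using Real.sinh_lt_sinh.2 hw0 |>.le)
        linarith
    have h0 : (0 : ℝ) ∈ Set.Ici (0 : ℝ) := Set.mem_Ici.2 (le_refl 0)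
    have := hmono h0 (Set.mem_Ici.2 hz) hz
    simpa using this
  rw [Real.tanh_eq_sinh_div_cosh, div_le_iff₀ (Real.cosh_pos y)]
  exact key y hy

lemma tanh_pow_le {p q : ℕ} (hp : 1 ≤ p) (hq : 1 ≤ q) {x : ℝ} (hx : 0 < x) :
    (Real.tanh (x ^ q)) ^ p ≤ x := by
  have hxq : 0 < x ^ q := pow_pos hx q
  have htpos : 0 < Real.tanh (x ^ q) := tanh_pos' hxq
  rcases le_or_gt x 1 with h1 | h1
  · have hxq_le : x ^ q ≤ x := by
      calc x ^ q ≤ x ^ 1 := pow_le_pow_of_le_one hx.le h1 hq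
      _ = x := pow_one x
    have ht_le : Real.tanh (x ^ q) ≤ x ^ q := tanh_le_self hxq.le
    have ht_le1 : Real.tanh (x ^ q) ≤ 1 := le_trans ht_le (le_trans hxq_le h1)
    calc (Real.tanh (x ^ q)) ^ p ≤ (Real.tanh (x ^ q)) ^ 1 :=
          pow_le_pow_of_le_one htpos.le ht_le1 hp
      _ = Real.tanh (x ^ q) := pow_one _
      _ ≤ x ^ q := ht_le
      _ ≤ x := hxq_le
  · have : (Real.tanh (x ^ q)) ^ p ≤ 1 :=
      pow_le_one₀ htpos.le (tanh_lt_one' _).le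
    linarith

theorem tanh_family_attracting (p q : ℕ) (hp : 1 ≤ p) (hq : 1 ≤ q) :
    ∃ t₀ : ℝ, 1 ≤ t₀ ∧ (π / 4) ^ ((1 : ℝ) / q) < t₀ ∧
      ∀ t : ℝ, 0 < t → t < t₀ → ∀ x : ℝ, 0 < x →
        Tendsto (fun n => (fun y : ℝ => t * (Real.tanh (y ^ q)) ^ p)^[n] x)
          atTop (nhds 0) := by
  refine ⟨1, le_refl 1, ?_, ?_⟩
  · apply Real.rpow_lt_one (by positivity)
    · rw [div_lt_one (by norm_num)]
      exact lt_trans Real.pi_lt_d2 (by norm_num)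
    · have : (0 : ℝ) < q := by exact_mod_cast hq
      positivity
  · intro t ht ht1 x hx
    set f : ℝ → ℝ := fun y => t * (Real.tanh (y ^ q)) ^ p with hf
    have key : ∀ n : ℕ, 0 < f^[n] x ∧ f^[n] x ≤ t ^ n * x := by
      intro n
      induction n with
      | zero => simp [hx, hx.le]
      | succ n ih =>
        obtain ⟨h1, h2⟩ := ih
        rw [Function.iterate_succ_apply']
        constructor
        · exact mul_pos ht (pow_pos (tanh_pos' (pow_pos h1 q)) p)
        · have hle : (Real.tanh ((f^[n] x) ^ q)) ^ p ≤ f^[n] x :=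
            tanh_pow_le hp hq h1
          calc t * (Real.tanh ((f^[n] x) ^ q)) ^ p ≤ t * f^[n] x :=
                mul_le_mul_of_nonneg_left hle ht.le
            _ ≤ t * (t ^ n * x) := mul_le_mul_of_nonneg_left h2 ht.le
            _ = t ^ (n + 1) * x := by ring
    have hgeo : Tendsto (fun n : ℕ => t ^ n * x) atTop (nhds 0) := by
      have := (tendsto_pow_atTop_nhds_zero_of_lt_one ht.le ht1).mul_const x
      simpa using this
    exact squeeze_zero (fun n => (key n).1.le) (fun n => (key n).2) hgeo
end
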